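/- arXiv:1504.04407 — 10 statements merged into one kernel-verified Lean document; each statement's English description precedes it below -/
import Mathlib

section
/- Let n ≥ 2 and 1 ≤ τ ≤ n be integers, let ξ_1,…,ξ_n be vectors in ℝ^d, and let ξ̄ = (1/n)∑_{i=1}^n ξ_i. If Ŝ is a subset of {1,…,n} of cardinality τ chosen uniformly at random from all subsets of cardinality τ, then E[‖(1/τ)∑_{i∈Ŝ} ξ_i − ξ̄‖²] ≤ (1/(nτ))·((n−τ)/(n−1))·∑_{i=1}^n ‖ξ_i‖². -/
open Finset

lemma count_subsets {n : ℕ} (t : Finset (Fin n)) (k : ℕ) (htk : t.card ≤ k) :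
    ((Finset.powersetCard k (Finset.univ : Finset (Fin n))).filter (fun S => t ⊆ S)).card
      = (n - t.card).choose (k - t.card) := by
  have : ((Finset.powersetCard k (Finset.univ : Finset (Fin n))).filter (fun S => t ⊆ S)).card
      = (Finset.powersetCard (k - t.card) ((Finset.univ : Finset (Fin n)) \ t)).card := by
    apply Finset.card_bij' (fun S _ => S \ t) (fun T _ => T ∪ t)
    · intro S hS
      simp only [mem_filter, mem_powersetCard] at hS
      rw [mem_powersetCard]
      refine ⟨fun x hx => ?_, ?_⟩
      · simp only [mem_sdiff] at hx ⊢
        exact ⟨mem_univ _, hx.2⟩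
      · rw [card_sdiff_of_subset hS.2, hS.1.2]
    · intro T hT
      rw [mem_powersetCard] at hT
      have hdisj : Disjoint T t := by
        intro u huT hut x hx
        have := hT.1 (huT hx)
        simp only [mem_sdiff] at this
        exact absurd (hut hx) this.2
      simp only [mem_filter, mem_powersetCard]
      refine ⟨⟨subset_univ _, ?_⟩, subset_union_right⟩
      rw [card_union_of_disjoint hdisj, hT.2]
      omega
    · intro S hS
      simp only [mem_filter] at hS
      rw [sdiff_union_of_subset hS.2]
    · intro T hT
      rw [mem_powersetCard] at hT
      have hdisj : Disjoint T t := by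
        intro u huT hut x hx
        have := hT.1 (huT hx)
        simp only [mem_sdiff] at this
        exact absurd (hut hx) this.2
      rw [union_sdiff_cancel_right]; exact hdisj
  rw [this, card_powersetCard, card_sdiff_of_subset (subset_univ t), card_univ, Fintype.card_fin]

lemma sum_mem_expand {n : ℕ} (S : Finset (Fin n)) (g : Fin n → ℝ) :
    ∑ i ∈ S, g i = ∑ i, if i ∈ S then g i else 0 := by
  rw [Finset.sum_ite_mem, univ_inter]

lemma first_moment {n : ℕ} (P : Finset (Finset (Fin n))) (f : Fin n → ℝ) :
    ∑ S ∈ P, ∑ i ∈ S, f i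
      = ∑ i, ((P.filter (fun S => i ∈ S)).card : ℝ) * f i := by
  simp_rw [sum_mem_expand _ f]
  rw [Finset.sum_comm]
  refine Finset.sum_congr rfl fun i _ => ?_
  rw [← Finset.sum_filter, Finset.sum_const, nsmul_eq_mul]

lemma second_moment {n : ℕ} (P : Finset (Finset (Fin n))) (f : Fin n → ℝ) :
    ∑ S ∈ P, (∑ i ∈ S, f i) ^ 2
      = ∑ i, ∑ j, ((P.filter (fun S => i ∈ S ∧ j ∈ S)).card : ℝ) * (f i * f j) := by
  have key : ∀ S ∈ P, (∑ i ∈ S, f i) ^ 2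
      = ∑ i, ∑ j, if i ∈ S ∧ j ∈ S then f i * f j else 0 := by
    intro S _
    rw [sq, Finset.sum_mul_sum]
    rw [sum_mem_expand S (fun i => ∑ j ∈ S, f i * f j)]
    refine Finset.sum_congr rfl fun i _ => ?_
    by_cases hi : i ∈ S
    · simp only [hi, if_true, true_and]
      rw [sum_mem_expand S (fun j => f i * f j)]
    · simp [hi]
  rw [Finset.sum_congr rfl key, Finset.sum_comm]
  refine Finset.sum_congr rfl fun i _ => ?_
  rw [Finset.sum_comm]
  refine Finset.sum_congr rfl fun j _ => ?_
  rw [← Finset.sum_filter, Finset.sum_const, nsmul_eq_mul]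

lemma scalar_core (n τ : ℕ) (hn : 2 ≤ n) (hτ1 : 1 ≤ τ) (hτn : τ ≤ n)
    (m c1 e2 A Sg : ℝ) (hm : m = (n.choose τ : ℝ))
    (hc1m : (n:ℝ) * c1 = (τ:ℝ) * m)
    (he2m : (n:ℝ) * ((n:ℝ) - 1) * e2 = (τ:ℝ) * ((τ:ℝ) - 1) * m) :
    m⁻¹ * ((τ:ℝ)⁻¹ ^ 2 * (c1 * A + e2 * (Sg ^ 2 - A))
        - 2 * (τ:ℝ)⁻¹ * ((n:ℝ)⁻¹ * Sg) * (c1 * Sg) + m * ((n:ℝ)⁻¹ * Sg) ^ 2)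
      ≤ (1 / ((n : ℝ) * (τ : ℝ))) * (((n : ℝ) - (τ : ℝ)) / ((n : ℝ) - 1)) * A := by
  have hnR : (0:ℝ) < n := by exact_mod_cast (by omega : 0 < n)
  have hτR : (0:ℝ) < τ := by exact_mod_cast (by omega : 0 < τ)
  have hn1R : (0:ℝ) < (n:ℝ) - 1 := by
    have : (2:ℝ) ≤ n := by exact_mod_cast hn
    linarith
  have hτnR : (τ:ℝ) ≤ n := by exact_mod_cast hτn
  have hmpos : (0:ℝ) < m := by
    rw [hm]; exact_mod_cast Nat.choose_pos hτn
  have hc1' : c1 = (τ:ℝ) * m / n := by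
    rw [eq_div_iff hnR.ne']; linarith
  have he2' : e2 = (τ:ℝ) * ((τ:ℝ) - 1) * m / ((n:ℝ) * ((n:ℝ) - 1)) := by
    rw [eq_div_iff (mul_pos hnR hn1R).ne']; linarith
  have hkey : m⁻¹ * ((τ:ℝ)⁻¹ ^ 2 * (c1 * A + e2 * (Sg ^ 2 - A))
        - 2 * (τ:ℝ)⁻¹ * ((n:ℝ)⁻¹ * Sg) * (c1 * Sg) + m * ((n:ℝ)⁻¹ * Sg) ^ 2)
      = (1 / ((n : ℝ) * (τ : ℝ))) * (((n : ℝ) - (τ : ℝ)) / ((n : ℝ) - 1)) * A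
        - ((n:ℝ) - τ) / ((τ:ℝ) * (n:ℝ) ^ 2 * ((n:ℝ) - 1)) * Sg ^ 2 := by
    rw [hc1', he2']
    field_simp
    ring
  rw [hkey]
  have hY : 0 ≤ ((n:ℝ) - τ) / ((τ:ℝ) * (n:ℝ) ^ 2 * ((n:ℝ) - 1)) * Sg ^ 2 :=
    mul_nonneg (div_nonneg (by linarith) (by positivity)) (sq_nonneg _)
  linarith

lemma scalar_bound (n τ : ℕ) (hn : 2 ≤ n) (hτ1 : 1 ≤ τ) (hτn : τ ≤ n) (x : Fin n → ℝ) :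
    (((Finset.powersetCard τ (Finset.univ : Finset (Fin n))).card : ℝ))⁻¹ *
        ∑ S ∈ Finset.powersetCard τ (Finset.univ : Finset (Fin n)),
          ((τ : ℝ)⁻¹ * (∑ i ∈ S, x i) - (n : ℝ)⁻¹ * ∑ i, x i) ^ 2
      ≤ (1 / ((n : ℝ) * (τ : ℝ))) * (((n : ℝ) - (τ : ℝ)) / ((n : ℝ) - 1)) *
          ∑ i, (x i) ^ 2 := by
  set P := Finset.powersetCard τ (Finset.univ : Finset (Fin n)) with hP
  set m : ℝ := (n.choose τ : ℝ) with hm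
  set c1 : ℝ := (((n - 1).choose (τ - 1) : ℕ) : ℝ) with hc1def
  set e2 : ℝ := if 2 ≤ τ then (((n - 2).choose (τ - 2) : ℕ) : ℝ) else 0 with he2def
  set Sg : ℝ := ∑ i, x i with hSg
  set A : ℝ := ∑ i, (x i) ^ 2 with hA
  have hPcard : ((P.card : ℕ) : ℝ) = m := by
    rw [hP, card_powersetCard, card_univ, Fintype.card_fin, hm]
  -- counts
  have hcount1 : ∀ i : Fin n, (((P.filter (fun S => i ∈ S)).card : ℕ) : ℝ) = c1 := by
    intro i
    have h := count_subsets ({i} : Finset (Fin n)) τ (by simpa using hτ1)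
    simp only [card_singleton, singleton_subset_iff] at h
    rw [hc1def]
    exact_mod_cast h
  have hcount2 : ∀ i j : Fin n, i ≠ j →
      (((P.filter (fun S => i ∈ S ∧ j ∈ S)).card : ℕ) : ℝ) = e2 := by
    intro i j hij
    by_cases hτ2 : 2 ≤ τ
    · have hcard2 : ({i, j} : Finset (Fin n)).card = 2 := by
        rw [card_insert_of_notMem (by simpa using hij), card_singleton]
      have h := count_subsets ({i, j} : Finset (Fin n)) τ (by rw [hcard2]; exact hτ2)
      rw [hcard2] at h
      simp only [insert_subset_iff, singleton_subset_iff] at h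
      rw [he2def, if_pos hτ2]
      exact_mod_cast h
    · have hτeq : τ = 1 := by omega
      have hempty : P.filter (fun S => i ∈ S ∧ j ∈ S) = ∅ := by
        rw [Finset.filter_eq_empty_iff]
        intro S hS
        rw [hP, mem_powersetCard] at hS
        rintro ⟨hiS, hjS⟩
        have h2 : 1 < S.card := Finset.one_lt_card.2 ⟨i, hiS, j, hjS, hij⟩
        omega
      rw [hempty, he2def, if_neg hτ2]
      simp
  -- choose identities
  have hc1m : (n:ℝ) * c1 = (τ:ℝ) * m := by
    have h := Nat.add_one_mul_choose_eq (n - 1) (τ - 1)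
    rw [show n - 1 + 1 = n by omega, show τ - 1 + 1 = τ by omega] at h
    have h' : ((n * (n - 1).choose (τ - 1) : ℕ) : ℝ) = ((n.choose τ * τ : ℕ) : ℝ) := by
      exact_mod_cast congrArg (Nat.cast : ℕ → ℝ) h
    push_cast at h'
    rw [hc1def, hm]
    linarith
  have he2m : (n:ℝ) * ((n:ℝ) - 1) * e2 = (τ:ℝ) * ((τ:ℝ) - 1) * m := by
    by_cases hτ2 : 2 ≤ τ
    · have h1 := Nat.add_one_mul_choose_eq (n - 2) (τ - 2)
      rw [show n - 2 + 1 = n - 1 by omega, show τ - 2 + 1 = τ - 1 by omega] at h1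
      have h2 := Nat.add_one_mul_choose_eq (n - 1) (τ - 1)
      rw [show n - 1 + 1 = n by omega, show τ - 1 + 1 = τ by omega] at h2
      have hr1 : ((n:ℝ) - 1) * ((n - 2).choose (τ - 2) : ℝ)
          = ((n - 1).choose (τ - 1) : ℝ) * ((τ:ℝ) - 1) := by
        have := congrArg (Nat.cast : ℕ → ℝ) h1
        push_cast [Nat.cast_sub (by omega : 1 ≤ n), Nat.cast_sub (by omega : 1 ≤ τ)] at this
        linarith
      have hr2 : (n:ℝ) * ((n - 1).choose (τ - 1) : ℝ) = (n.choose τ : ℝ) * (τ:ℝ) := by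
        have := congrArg (Nat.cast : ℕ → ℝ) h2
        push_cast at this ⊢
        linarith
      rw [he2def, if_pos hτ2, hm]
      nlinarith [hr1, hr2]
    · have hτeq : τ = 1 := by omega
      rw [he2def, if_neg hτ2, hτeq]
      norm_num
  -- moments
  have hT1 : ∑ S ∈ P, ∑ i ∈ S, x i = c1 * Sg := by
    rw [first_moment]
    simp_rw [hcount1]
    rw [← Finset.mul_sum]
  have hT2 : ∑ S ∈ P, (∑ i ∈ S, x i) ^ 2 = c1 * A + e2 * (Sg ^ 2 - A) := by
    rw [second_moment]
    have inner : ∀ i ∈ (univ : Finset (Fin n)),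
        ∑ j, (((P.filter (fun S => i ∈ S ∧ j ∈ S)).card : ℕ) : ℝ) * (x i * x j)
          = c1 * (x i) ^ 2 + e2 * (x i * Sg - (x i) ^ 2) := by
      intro i _
      rw [← Finset.add_sum_erase _ _ (mem_univ i)]
      have hii : (((P.filter (fun S => i ∈ S ∧ i ∈ S)).card : ℕ) : ℝ) = c1 := by
        simpa [and_self] using hcount1 i
      have herase : ∑ j ∈ univ.erase i,
          (((P.filter (fun S => i ∈ S ∧ j ∈ S)).card : ℕ) : ℝ) * (x i * x j)
            = e2 * (x i * (Sg - x i)) := by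
        have hc : ∀ j ∈ univ.erase i,
            (((P.filter (fun S => i ∈ S ∧ j ∈ S)).card : ℕ) : ℝ) * (x i * x j)
              = e2 * (x i * x j) := by
          intro j hj
          rw [hcount2 i j (Ne.symm (Finset.ne_of_mem_erase hj))]
        rw [Finset.sum_congr rfl hc, ← Finset.mul_sum, ← Finset.mul_sum,
            Finset.sum_erase_eq_sub (mem_univ i)]
      rw [hii, herase]
      ring
    rw [Finset.sum_congr rfl inner, Finset.sum_add_distrib, ← Finset.mul_sum, ← Finset.mul_sum]
    congr 1
    congr 1
    rw [Finset.sum_sub_distrib, ← Finset.sum_mul, ← hSg, ← hA, sq]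
  -- expansion
  have hsum : ∑ S ∈ P, ((τ : ℝ)⁻¹ * (∑ i ∈ S, x i) - (n : ℝ)⁻¹ * Sg) ^ 2
      = (τ:ℝ)⁻¹ ^ 2 * (c1 * A + e2 * (Sg ^ 2 - A))
        - 2 * (τ:ℝ)⁻¹ * ((n:ℝ)⁻¹ * Sg) * (c1 * Sg) + m * ((n:ℝ)⁻¹ * Sg) ^ 2 := by
    have expand : ∀ S ∈ P, ((τ : ℝ)⁻¹ * (∑ i ∈ S, x i) - (n : ℝ)⁻¹ * Sg) ^ 2
        = (τ:ℝ)⁻¹ ^ 2 * (∑ i ∈ S, x i) ^ 2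
          - 2 * (τ:ℝ)⁻¹ * ((n:ℝ)⁻¹ * Sg) * (∑ i ∈ S, x i) + ((n:ℝ)⁻¹ * Sg) ^ 2 := by
      intro S _
      ring
    rw [Finset.sum_congr rfl expand, Finset.sum_add_distrib, Finset.sum_sub_distrib,
        ← Finset.mul_sum, ← Finset.mul_sum, hT1, hT2, Finset.sum_const, nsmul_eq_mul, hPcard]
  rw [hPcard, hsum]
  exact scalar_core n τ hn hτ1 hτn m c1 e2 A Sg hm hc1m he2m

/-- Sampling-without-replacement variance bound (Lemma 2 of the paper).
For vectors `ξ 1, …, ξ n` in `ℝ^d` with average `ξ̄`, and `Ŝ` a uniformly random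
`τ`-element subset of `{1,…,n}`,
`E[‖(1/τ) ∑_{i∈Ŝ} ξ i − ξ̄‖²] ≤ (1/(nτ))·((n−τ)/(n−1))·∑ i ‖ξ i‖²`. -/

theorem sampling_variance_bound (d n τ : ℕ) (hn : 2 ≤ n) (hτ1 : 1 ≤ τ) (hτn : τ ≤ n)
    (ξ : Fin n → EuclideanSpace ℝ (Fin d))
    (ξbar : EuclideanSpace ℝ (Fin d)) (hξbar : ξbar = (n : ℝ)⁻¹ • ∑ i, ξ i) :
    (((Finset.powersetCard τ (Finset.univ : Finset (Fin n))).card : ℝ))⁻¹ *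
        ∑ S ∈ Finset.powersetCard τ (Finset.univ : Finset (Fin n)),
          ‖(τ : ℝ)⁻¹ • (∑ i ∈ S, ξ i) - ξbar‖ ^ 2
      ≤ (1 / ((n : ℝ) * (τ : ℝ))) * (((n : ℝ) - (τ : ℝ)) / ((n : ℝ) - 1)) *
          ∑ i, ‖ξ i‖ ^ 2 := by
  set P := Finset.powersetCard τ (Finset.univ : Finset (Fin n)) with hP
  have hnorm : ∀ v : EuclideanSpace ℝ (Fin d), ‖v‖ ^ 2 = ∑ k, (v k) ^ 2 := by
    intro v
    rw [EuclideanSpace.norm_eq, Real.sq_sqrt (by positivity)]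
    simp [sq_abs]
  have hcomp : ∀ S : Finset (Fin n), ‖(τ : ℝ)⁻¹ • (∑ i ∈ S, ξ i) - ξbar‖ ^ 2
      = ∑ k, ((τ : ℝ)⁻¹ * (∑ i ∈ S, ξ i k) - (n : ℝ)⁻¹ * ∑ i, ξ i k) ^ 2 := by
    intro S
    rw [hnorm]
    refine Finset.sum_congr rfl fun k _ => ?_
    congr 1
    rw [PiLp.sub_apply, PiLp.smul_apply, smul_eq_mul, WithLp.ofLp_sum, Finset.sum_apply, hξbar,
        PiLp.smul_apply, smul_eq_mul, WithLp.ofLp_sum, Finset.sum_apply]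
  calc ((P.card : ℝ))⁻¹ * ∑ S ∈ P, ‖(τ : ℝ)⁻¹ • (∑ i ∈ S, ξ i) - ξbar‖ ^ 2
      = ∑ k, ((P.card : ℝ))⁻¹ *
          ∑ S ∈ P, ((τ : ℝ)⁻¹ * (∑ i ∈ S, ξ i k) - (n : ℝ)⁻¹ * ∑ i, ξ i k) ^ 2 := by
        rw [Finset.sum_congr rfl fun S _ => hcomp S, Finset.sum_comm, Finset.mul_sum]
    _ ≤ ∑ k, (1 / ((n : ℝ) * (τ : ℝ))) * (((n : ℝ) - (τ : ℝ)) / ((n : ℝ) - 1)) *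
          ∑ i, (ξ i k) ^ 2 :=
        Finset.sum_le_sum fun k _ => scalar_bound n τ hn hτ1 hτn (fun i => ξ i k)
    _ = (1 / ((n : ℝ) * (τ : ℝ))) * (((n : ℝ) - (τ : ℝ)) / ((n : ℝ) - 1)) *
          ∑ i, ‖ξ i‖ ^ 2 := by
        rw [← Finset.mul_sum]
        congr 1
        rw [Finset.sum_comm]
        exact Finset.sum_congr rfl fun i _ => (hnorm (ξ i)).symm
end

section
/- For every h with 0 < h < (1/(4αL))·(ρ/(ρ+1)), the quantity m(h) = (1 + 4αh²Lμ) / ( hμ·(ρ − 4αhL(ρ+1)) ) is positive, 1 − 4hLα > 0, and m = m(h) satisfies the rate equation 1/( m·h·μ·(1 − 4hLα) ) + 4hLα·(m+1) / ( m·(1 − 4hLα) ) = ρ. -/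
/-- For `0 < h < (1/(4αL))·(ρ/(ρ+1))`, the value
`m(h) = (1 + 4αh²Lμ)/(hμ(ρ − 4αhL(ρ+1)))` is positive, `1 − 4hLα > 0`, and
`m = m(h)` solves the rate equation
`1/(m h μ (1 − 4hLα)) + 4hLα(m+1)/(m(1 − 4hLα)) = ρ`. -/
theorem rate_equation_solution (L μ ρ : ℝ) (hL : 0 < L) (hμ : 0 < μ)
    (hρ0 : 0 < ρ) (hρ1 : ρ < 1)
    (n b : ℕ) (hn : 2 ≤ n) (hb1 : 1 ≤ b) (hbn : b < n)
    (α : ℝ) (hα : α = ((n : ℝ) - (b : ℝ)) / ((b : ℝ) * ((n : ℝ) - 1)))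
    (h : ℝ) (hh0 : 0 < h) (hh : h < (1 / (4 * α * L)) * (ρ / (ρ + 1)))
    (m : ℝ) (hm : m = (1 + 4 * α * h ^ 2 * L * μ) /
        (h * μ * (ρ - 4 * α * h * L * (ρ + 1)))) :
    0 < m ∧ 0 < 1 - 4 * h * L * α ∧
      1 / (m * h * μ * (1 - 4 * h * L * α))
        + 4 * h * L * α * (m + 1) / (m * (1 - 4 * h * L * α)) = ρ := by
  have hbR : (1 : ℝ) ≤ (b : ℝ) := by exact_mod_cast hb1
  have hnb : (b : ℝ) < (n : ℝ) := by exact_mod_cast hbn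
  have hα0 : 0 < α := by
    rw [hα]
    have hnR : (2:ℝ) ≤ (n:ℝ) := by exact_mod_cast hn
    apply div_pos (by linarith) (by nlinarith)
  have h4 : 0 < 4 * α * L := by positivity
  -- from hh: 4αLh(ρ+1) < ρ
  have key : 4 * α * h * L * (ρ + 1) < ρ := by
    have e : (1/(4*α*L)) * (ρ/(ρ+1)) = (ρ/(ρ+1))/(4*α*L) := by ring
    rw [e, lt_div_iff₀ h4, lt_div_iff₀ (by linarith : (0:ℝ) < ρ+1)] at hh
    nlinarith [hh]
  have hden : 0 < ρ - 4 * α * h * L * (ρ + 1) := by linarith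
  have h1 : 0 < 1 - 4 * h * L * α := by nlinarith
  have hm0 : 0 < m := by
    rw [hm]; positivity
  refine ⟨hm0, h1, ?_⟩
  have hden2 : h * μ * (ρ - 4 * α * h * L * (ρ + 1)) ≠ 0 := by positivity
  have hmval : m * (h * μ * (ρ - 4 * α * h * L * (ρ + 1))) =
      1 + 4 * α * h ^ 2 * L * μ := by
    rw [hm, div_mul_cancel₀ _ hden2]
  field_simp
  rw [div_eq_iff (by linarith)]
  linear_combination (-1 : ℝ) * hmval
end

section
/- If h̃ = √( ((1+ρ)/(ρμ))² + 1/(4μαL) ) − (1+ρ)/(ρμ) satisfies h̃ > 1/L, then ρ > 4α(1+ρ). -/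
/-- Claim #2 in the proof of Theorem 2: if the stationary point
`h̃ = √(((1+ρ)/(ρμ))² + 1/(4μαL)) − (1+ρ)/(ρμ)` exceeds `1/L`,
then `ρ > 4α(1+ρ)`. -/
theorem capped_stepsize_denominator_positive (L μ ρ : ℝ) (hL : 0 < L) (hμ : 0 < μ)
    (hρ0 : 0 < ρ) (hρ1 : ρ < 1)
    (n b : ℕ) (hn : 2 ≤ n) (hb1 : 1 ≤ b) (hbn : b < n)
    (α : ℝ) (hα : α = ((n : ℝ) - (b : ℝ)) / ((b : ℝ) * ((n : ℝ) - 1)))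
    (htilde : ℝ)
    (hhtilde : htilde = Real.sqrt (((1 + ρ) / (ρ * μ)) ^ 2 + 1 / (4 * μ * α * L))
        - (1 + ρ) / (ρ * μ))
    (hbig : 1 / L < htilde) :
    4 * α * (1 + ρ) < ρ := by
  have hb0 : (0:ℝ) < (b:ℝ) := by exact_mod_cast hb1
  have hn1 : (1:ℝ) < (n:ℝ) := by exact_mod_cast hn.trans_lt' (by norm_num)
  have hbn' : (b:ℝ) < (n:ℝ) := by exact_mod_cast hbn
  have hα0 : 0 < α := by
    rw [hα]; exact div_pos (by linarith) (mul_pos hb0 (by linarith))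
  set A := (1 + ρ) / (ρ * μ) with hA
  have hA0 : 0 < A := by positivity
  have hkey : (1 / L + A) ^ 2 < A ^ 2 + 1 / (4 * μ * α * L) := by
    have h1 : 1 / L + A < Real.sqrt (A ^ 2 + 1 / (4 * μ * α * L)) := by
      rw [hhtilde] at hbig; linarith
    have h2 : 0 ≤ A ^ 2 + 1 / (4 * μ * α * L) := by positivity
    calc (1 / L + A) ^ 2 < Real.sqrt (A ^ 2 + 1 / (4 * μ * α * L)) ^ 2 := by
          apply pow_lt_pow_left₀ h1 (by positivity)
          norm_num
      _ = A ^ 2 + 1 / (4 * μ * α * L) := Real.sq_sqrt h2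
  have hx : (0:ℝ) < 1 / L := by positivity
  have heq : 1 / (4 * μ * α * L) = 1 / L * (1 / (4 * μ * α)) := by
    rw [one_div, one_div, one_div, show 4 * μ * α * L = L * (4 * μ * α) by ring,
      mul_inv]
  have h1 : 1 / L * (1 / L + 2 * A) < 1 / L * (1 / (4 * μ * α)) := by
    nlinarith [hkey, heq]
  have h2 : 1 / L + 2 * A < 1 / (4 * μ * α) := lt_of_mul_lt_mul_left h1 hx.le
  have h3 : 2 * A < 1 / (4 * μ * α) := by linarith
  rw [hA, show 2 * ((1 + ρ) / (ρ * μ)) = 2 * (1 + ρ) / (ρ * μ) by ring,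
    div_lt_div_iff₀ (by positivity) (by positivity : (0:ℝ) < 4 * μ * α)] at h3
  nlinarith [mul_pos hμ hα0]
end

section
/- Define m(h) = (1 + 4αh²Lμ) / ( hμ·(ρ − 4αhL(ρ+1)) ) for h in the interval I_h = (0, (1/(4αL))·(ρ/(ρ+1))), and let h̃ = √( ((1+ρ)/(ρμ))² + 1/(4μαL) ) − (1+ρ)/(ρμ). If h̃ ≤ 1/L, then m(h̃) ≤ m(h) for every h ∈ I_h, and m(h̃) = (2κ/ρ)·( (1 + 1/ρ)·4α + √( 4α/κ + (1 + 1/ρ)²·(4α)² ) ), where κ = L/μ. -/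
set_option maxHeartbeats 1000000

/-- Theorem 2, first case: if `h̃ ≤ 1/L`, then `h̃` minimizes
`m(h) = (1 + 4αh²Lμ)/(hμ(ρ − 4αhL(ρ+1)))` over `I_h = (0, (ρ/(ρ+1))/(4αL))`, with
`m(h̃) = (2κ/ρ)·((1 + 1/ρ)·4α + √(4α/κ + (1 + 1/ρ)²(4α)²))`, `κ = L/μ`. -/
theorem optimal_m_unconstrained (L μ ρ : ℝ) (hL : 0 < L) (hμ : 0 < μ)
    (hρ0 : 0 < ρ) (hρ1 : ρ < 1)
    (n b : ℕ) (hn : 2 ≤ n) (hb1 : 1 ≤ b) (hbn : b < n)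
    (α : ℝ) (hα : α = ((n : ℝ) - (b : ℝ)) / ((b : ℝ) * ((n : ℝ) - 1)))
    (κ : ℝ) (hκ : κ = L / μ)
    (mfun : ℝ → ℝ)
    (hmfun : ∀ h, mfun h = (1 + 4 * α * h ^ 2 * L * μ) /
        (h * μ * (ρ - 4 * α * h * L * (ρ + 1))))
    (htilde : ℝ)
    (hhtilde : htilde = Real.sqrt (((1 + ρ) / (ρ * μ)) ^ 2 + 1 / (4 * μ * α * L))
        - (1 + ρ) / (ρ * μ))
    (hcap : htilde ≤ 1 / L) :
    (∀ h, 0 < h → h < (1 / (4 * α * L)) * (ρ / (ρ + 1)) → mfun htilde ≤ mfun h) ∧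
      mfun htilde = (2 * κ / ρ) * ((1 + 1 / ρ) * (4 * α)
        + Real.sqrt (4 * α / κ + (1 + 1 / ρ) ^ 2 * (4 * α) ^ 2)) := by
  have hαpos : 0 < α := by
    have h1 : (1:ℝ) ≤ (b:ℝ) := by exact_mod_cast hb1
    have h2 : (b:ℝ) < (n:ℝ) := by exact_mod_cast hbn
    have h3 : (2:ℝ) ≤ (n:ℝ) := by exact_mod_cast hn
    rw [hα]
    apply div_pos <;> nlinarith
  set B : ℝ := (1 + ρ) / (ρ * μ) with hB
  have hBpos : 0 < B := by rw [hB]; positivity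
  set T : ℝ := Real.sqrt (B ^ 2 + 1 / (4 * μ * α * L)) with hT
  have hupos : 0 < 1 / (4 * μ * α * L) := by positivity
  have hargnn : (0:ℝ) ≤ B ^ 2 + 1 / (4 * μ * α * L) := by positivity
  have hT2 : T ^ 2 = B ^ 2 + 1 / (4 * μ * α * L) := Real.sq_sqrt hargnn
  have hTnn : 0 ≤ T := Real.sqrt_nonneg _
  have hTgtB : B < T := by nlinarith [hT2, hupos, hBpos, hTnn]
  have hht : htilde = T - B := hhtilde
  have hhtpos : 0 < htilde := by rw [hht]; linarith
  have hu : (4 * μ * α * L) * (1 / (4 * μ * α * L)) = 1 := by field_simp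
  have hTB : (T - B) * (T + B) * (4 * μ * α * L) = 1 := by
    linear_combination (4 * μ * α * L) * hT2 + hu
  have hv : ρ * μ * B = 1 + ρ := by rw [hB]; field_simp
  -- the key identity
  have hK : 4 * α * L * μ * ρ * htilde ^ 2 + 8 * α * L * (1 + ρ) * htilde = ρ := by
    rw [hht]
    linear_combination ρ * hTB - 8 * α * L * (T - B) * hv
  -- htilde is inside the interval
  have hhtlt : htilde * (4 * α * L * (ρ + 1)) < ρ := by
    have h1 : 0 ≤ 4 * α * L * μ * ρ * htilde ^ 2 := by positivity
    nlinarith [hK, h1, hρ0, hhtpos]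
  have hDtpos : 0 < htilde * μ * (ρ - 4 * α * htilde * L * (ρ + 1)) := by
    apply mul_pos (mul_pos hhtpos hμ)
    nlinarith [hhtlt]
  constructor
  · intro h hpos hlt
    have hd : 4 * α * h * L * (ρ + 1) < ρ := by
      have h2 : (1 / (4 * α * L)) * (ρ / (ρ + 1)) * (4 * α * L * (ρ + 1)) = ρ := by
        field_simp
      nlinarith [mul_lt_mul_of_pos_right hlt (show (0:ℝ) < 4 * α * L * (ρ + 1) by positivity), h2]
    have hDhpos : 0 < h * μ * (ρ - 4 * α * h * L * (ρ + 1)) := by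
      apply mul_pos (mul_pos hpos hμ)
      linarith
    rw [hmfun htilde, hmfun h, div_le_div_iff₀ hDtpos hDhpos]
    have key : (1 + 4 * α * h ^ 2 * L * μ) * (htilde * μ * (ρ - 4 * α * htilde * L * (ρ + 1)))
        - (1 + 4 * α * htilde ^ 2 * L * μ) * (h * μ * (ρ - 4 * α * h * L * (ρ + 1)))
        = 4 * α * L * μ * (μ * ρ * htilde + ρ + 1) * (h - htilde) ^ 2 := by
      linear_combination (μ * (h - htilde)) * hK
    have hco : 0 ≤ 4 * α * L * μ * (μ * ρ * htilde + ρ + 1) * (h - htilde) ^ 2 := by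
      have : 0 < 4 * α * L * μ * (μ * ρ * htilde + ρ + 1) := by
        have : 0 < μ * ρ * htilde := by positivity
        nlinarith
      positivity
    linarith [key, hco]
  · have harg : 4 * α / κ + (1 + 1 / ρ) ^ 2 * (4 * α) ^ 2 = (4 * α * μ * T) ^ 2 := by
      rw [hκ, show (4 * α * μ * T) ^ 2 = (4 * α * μ) ^ 2 * T ^ 2 from by ring, hT2, hB]
      field_simp
      ring
    have hMT : Real.sqrt (4 * α / κ + (1 + 1 / ρ) ^ 2 * (4 * α) ^ 2) = 4 * α * μ * T := by
      rw [harg, Real.sqrt_sq (by positivity)]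
    rw [hmfun, hMT, hκ, div_eq_iff (ne_of_gt hDtpos)]
    have hTt : T = htilde + B := by rw [hht]; ring
    rw [hTt, hB]
    field_simp
    linear_combination (2 * (4 * α * L) * (ρ + 1) * htilde - ρ) * hK
end

section
/- Define m(h) = (1 + 4αh²Lμ) / ( hμ·(ρ − 4αhL(ρ+1)) ) and let h̃ = √( ((1+ρ)/(ρμ))² + 1/(4μαL) ) − (1+ρ)/(ρμ). If h̃ > 1/L, then every h ∈ (0, 1/L] lies in the interval I_h = (0, (1/(4αL))·(ρ/(ρ+1))), m(1/L) ≤ m(h) for every h ∈ (0, 1/L], and m(1/L) = (κ + 4α) / ( ρ − 4α(1+ρ) ), where κ = L/μ. -/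
set_option maxHeartbeats 1000000


/-- Theorem 2, second case: if `h̃ > 1/L`, then every `h ∈ (0, 1/L]` lies in
`I_h = (0, (ρ/(ρ+1))/(4αL))`, the stepsize `1/L` minimizes
`m(h) = (1 + 4αh²Lμ)/(hμ(ρ − 4αhL(ρ+1)))` over `(0, 1/L]`, and
`m(1/L) = (κ + 4α)/(ρ − 4α(1+ρ))`, `κ = L/μ`. -/
theorem optimal_m_capped (L μ ρ : ℝ) (hL : 0 < L) (hμ : 0 < μ)
    (hρ0 : 0 < ρ) (hρ1 : ρ < 1)
    (n b : ℕ) (hn : 2 ≤ n) (hb1 : 1 ≤ b) (hbn : b < n)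
    (α : ℝ) (hα : α = ((n : ℝ) - (b : ℝ)) / ((b : ℝ) * ((n : ℝ) - 1)))
    (κ : ℝ) (hκ : κ = L / μ)
    (mfun : ℝ → ℝ)
    (hmfun : ∀ h, mfun h = (1 + 4 * α * h ^ 2 * L * μ) /
        (h * μ * (ρ - 4 * α * h * L * (ρ + 1))))
    (htilde : ℝ)
    (hhtilde : htilde = Real.sqrt (((1 + ρ) / (ρ * μ)) ^ 2 + 1 / (4 * μ * α * L))
        - (1 + ρ) / (ρ * μ))
    (hcap : 1 / L < htilde) :
    (∀ h, 0 < h → h ≤ 1 / L → h < (1 / (4 * α * L)) * (ρ / (ρ + 1))) ∧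
    (∀ h, 0 < h → h ≤ 1 / L → mfun (1 / L) ≤ mfun h) ∧
      mfun (1 / L) = (κ + 4 * α) / (ρ - 4 * α * (1 + ρ)) := by
  have hbR : (1:ℝ) ≤ (b:ℝ) := by exact_mod_cast hb1
  have hnR : (2:ℝ) ≤ (n:ℝ) := by exact_mod_cast hn
  have hbnR : (b:ℝ) < (n:ℝ) := by exact_mod_cast hbn
  have hα' : 0 < α := by
    rw [hα]; apply div_pos <;> nlinarith
  set g : ℝ := 1 / L with hg
  have hg0 : 0 < g := by positivity
  have hgL : g * L = 1 := by rw [hg]; field_simp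
  set c : ℝ := (1 + ρ) / (ρ * μ) with hcdef
  have hc0 : 0 < c := by positivity
  have hcμ : c * (ρ * μ) = 1 + ρ := by rw [hcdef]; field_simp
  set k : ℝ := 1 / (4 * μ * α * L) with hkdef
  have hk : k * (4 * μ * α * L) = 1 := by rw [hkdef]; field_simp
  have h1 : g + c < Real.sqrt (c ^ 2 + k) := by
    rw [hhtilde] at hcap; linarith
  have h2 : (g + c) ^ 2 < c ^ 2 + k := by
    have h0 : 0 ≤ g + c := by positivity
    exact (Real.lt_sqrt h0).1 h1
  have e : g ^ 2 + 2 * c * g < k := by nlinarith [h2]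
  -- clear denominators: key inequality q(1/L) < 0
  have hq : 4 * α * μ * ρ + 8 * α * L * (1 + ρ) < ρ * L := by
    have hP : (0:ℝ) < 4 * μ * α * L * ρ * L := by positivity
    have step := mul_lt_mul_of_pos_right e hP
    have eg2 : g ^ 2 * (4 * μ * α * L * ρ * L) = 4 * α * μ * ρ := by
      calc g ^ 2 * (4 * μ * α * L * ρ * L) = 4 * α * μ * ρ * ((g * L) * (g * L)) := by ring
        _ = 4 * α * μ * ρ := by rw [hgL]; ring
    have ec2 : 2 * c * g * (4 * μ * α * L * ρ * L) = 8 * α * L * (1 + ρ) := by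
      calc 2 * c * g * (4 * μ * α * L * ρ * L)
          = 8 * α * L * ((c * (ρ * μ)) * (g * L)) := by ring
        _ = 8 * α * L * (1 + ρ) := by rw [hcμ, hgL]; ring
    have ek : k * (4 * μ * α * L * ρ * L) = ρ * L := by
      calc k * (4 * μ * α * L * ρ * L) = ρ * L * (k * (4 * μ * α * L)) := by ring
        _ = ρ * L := by rw [hk]; ring
    nlinarith [step, eg2, ec2, ek]
  have h8 : 8 * α * L * (1 + ρ) < ρ * L := by
    nlinarith [mul_pos (mul_pos (mul_pos hα' hμ) hρ0) (by norm_num : (0:ℝ) < 4)]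
  have h9 : 8 * α * (1 + ρ) < ρ := by
    have t : (8 * α * (1 + ρ)) * L < ρ * L := by linarith [h8]
    exact lt_of_mul_lt_mul_right t hL.le
  have hden : 0 < ρ - 4 * α * (1 + ρ) := by
    nlinarith [mul_pos hα' (show (0:ℝ) < 1 + ρ by linarith)]
  -- useful simplification of the denominator at g
  have e5 : 4 * α * g * L * (ρ + 1) = 4 * α * (ρ + 1) := by
    calc 4 * α * g * L * (ρ + 1) = 4 * α * (ρ + 1) * (g * L) := by ring
      _ = 4 * α * (ρ + 1) := by rw [hgL]; ring
  have hDg : 0 < g * μ * (ρ - 4 * α * g * L * (ρ + 1)) := by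
    have h5 : ρ - 4 * α * g * L * (ρ + 1) = ρ - 4 * α * (1 + ρ) := by
      rw [e5]; ring
    rw [h5]
    exact mul_pos (mul_pos hg0 hμ) hden
  refine ⟨?_, ?_, ?_⟩
  · intro h hh0 hh1
    have hrhs : g < 1 / (4 * α * L) * (ρ / (ρ + 1)) := by
      rw [div_mul_div_comm, one_mul, lt_div_iff₀ (by positivity : (0:ℝ) < 4 * α * L * (ρ + 1))]
      calc g * (4 * α * L * (ρ + 1)) = 4 * α * (ρ + 1) * (g * L) := by ring
        _ = 4 * α * (ρ + 1) := by rw [hgL]; ring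
        _ < ρ := by nlinarith [mul_pos hα' (show (0:ℝ) < 1 + ρ by linarith)]
    linarith
  · intro h hh0 hh1
    have hgh : h ≤ g := hh1
    -- positivity of denominator at h
    have e6 : 4 * α * h * L * (ρ + 1) ≤ 4 * α * (ρ + 1) := by
      have := mul_le_mul_of_nonneg_left hgh
        (show (0:ℝ) ≤ 4 * α * L * (ρ + 1) by positivity)
      nlinarith [e5]
    have hdh : 0 < ρ - 4 * α * h * L * (ρ + 1) := by nlinarith [hden]
    have hDh : 0 < h * μ * (ρ - 4 * α * h * L * (ρ + 1)) :=
      mul_pos (mul_pos hh0 hμ) hdh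
    rw [hmfun, hmfun, div_le_div_iff₀ hDg hDh]
    -- key positivity: ρ - 8α(1+ρ) - 4αμρ g > 0 (from hq, times g)
    have hkeyg : 0 < ρ - 8 * α * (1 + ρ) - 4 * α * μ * ρ * g := by
      have t := mul_lt_mul_of_pos_right hq hg0
      have e1 : ρ * L * g = ρ := by
        calc ρ * L * g = ρ * (g * L) := by ring
          _ = ρ := by rw [hgL]; ring
      have e2 : (4 * α * μ * ρ + 8 * α * L * (1 + ρ)) * g
          = 4 * α * μ * ρ * g + 8 * α * (1 + ρ) * (g * L) := by ring
      rw [e2, e1, hgL] at t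
      linarith
    -- bracket inequality
    have hB : 0 ≤ ρ - 4 * α * L * (ρ + 1) * (g + h) - 4 * α * L * μ * ρ * (g * h) := by
      have hgh2 : g * h ≤ g * g := mul_le_mul_of_nonneg_left hgh hg0.le
      have e3 : 4 * α * L * (ρ + 1) * (g + h) ≤ 8 * α * (1 + ρ) := by
        have t1 : 4 * α * L * (ρ + 1) * (g + h) ≤ 4 * α * L * (ρ + 1) * (2 * g) :=
          mul_le_mul_of_nonneg_left (by linarith) (by positivity)
        have t2 : 4 * α * L * (ρ + 1) * (2 * g) = 8 * α * (ρ + 1) * (g * L) := by ring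
        rw [t2, hgL] at t1
        linarith
      have e4 : 4 * α * L * μ * ρ * (g * h) ≤ 4 * α * μ * ρ * g := by
        have t1 : 4 * α * L * μ * ρ * (g * h) ≤ 4 * α * L * μ * ρ * (g * g) :=
          mul_le_mul_of_nonneg_left hgh2 (by positivity)
        have t2 : 4 * α * L * μ * ρ * (g * g) = 4 * α * μ * ρ * g * (g * L) := by ring
        rw [t2, hgL] at t1
        linarith
      linarith [hkeyg, e3, e4]
    -- the exact algebraic identity for the cross-multiplied difference
    have key : (1 + 4 * α * h ^ 2 * L * μ) * (g * μ * (ρ - 4 * α * g * L * (ρ + 1)))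
        - (1 + 4 * α * g ^ 2 * L * μ) * (h * μ * (ρ - 4 * α * h * L * (ρ + 1)))
        = μ * (g - h) * (ρ - 4 * α * L * (ρ + 1) * (g + h)
            - 4 * α * L * μ * ρ * (g * h)) := by ring
    nlinarith [key, mul_nonneg (mul_nonneg hμ.le (by linarith : (0:ℝ) ≤ g - h)) hB]
  · rw [hmfun, hκ]
    rw [div_eq_div_iff (ne_of_gt hDg) (ne_of_gt hden)]
    have hLne : (L:ℝ) ≠ 0 := ne_of_gt hL
    have hμne : (μ:ℝ) ≠ 0 := ne_of_gt hμ
    rw [hg]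
    field_simp
    ring
end

section
/- Let h̃^b = √( ((1+ρ)/(ρμ))² + 1/(4μα(b)L) ) − (1+ρ)/(ρμ), where α(b) = (n−b)/(b(n−1)). Then h̃^b < 1/L if and only if b < b_0, where b_0 = ( 8ρnκ + 8nκ + 4ρn ) / ( ρnκ + (7ρ+8)κ + 4ρ ) and κ = L/μ. -/
/-- Threshold mini-batch size (equation (30) in the paper):
`h̃^b < 1/L` if and only if `b < b₀`, where
`b₀ = (8ρnκ + 8nκ + 4ρn)/(ρnκ + (7ρ+8)κ + 4ρ)` and `κ = L/μ`. -/
theorem stepsize_threshold_iff (L μ ρ : ℝ) (hL : 0 < L) (hμ : 0 < μ)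
    (hρ0 : 0 < ρ) (hρ1 : ρ < 1)
    (n b : ℕ) (hn : 2 ≤ n) (hb1 : 1 ≤ b) (hbn : b < n)
    (κ : ℝ) (hκ : κ = L / μ)
    (α : ℝ) (hα : α = ((n : ℝ) - (b : ℝ)) / ((b : ℝ) * ((n : ℝ) - 1)))
    (htilde : ℝ)
    (hhtilde : htilde = Real.sqrt (((1 + ρ) / (ρ * μ)) ^ 2 + 1 / (4 * μ * α * L))
        - (1 + ρ) / (ρ * μ))
    (b0 : ℝ)
    (hb0 : b0 = (8 * ρ * (n : ℝ) * κ + 8 * (n : ℝ) * κ + 4 * ρ * (n : ℝ)) /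
        (ρ * (n : ℝ) * κ + (7 * ρ + 8) * κ + 4 * ρ)) :
    htilde < 1 / L ↔ (b : ℝ) < b0 := by
  have hN2 : (2:ℝ) ≤ (n:ℝ) := by exact_mod_cast hn
  have hB1 : (1:ℝ) ≤ (b:ℝ) := by exact_mod_cast hb1
  have hBN : (b:ℝ) + 1 ≤ (n:ℝ) := by exact_mod_cast hbn
  have hNB : (0:ℝ) < (n:ℝ) - (b:ℝ) := by linarith
  have hN1 : (0:ℝ) < (n:ℝ) - 1 := by linarith
  have hB0 : (0:ℝ) < (b:ℝ) := by linarith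
  have hρμ : 0 < ρ * μ := mul_pos hρ0 hμ
  have hiL : 0 < 1 / L + (1 + ρ) / (ρ * μ) := by positivity
  have hαpos : 0 < α := by rw [hα]; positivity
  have hκμ : κ * μ = L := by rw [hκ]; field_simp
  have hκpos : 0 < κ := by rw [hκ]; positivity
  rw [hhtilde, sub_lt_iff_lt_add, Real.sqrt_lt' hiL]
  have e1 : 1 / (4 * μ * α * L)
      = (b:ℝ) * ((n:ℝ) - 1) / (4 * μ * ((n:ℝ) - (b:ℝ)) * L) := by
    rw [hα]
    rw [div_eq_div_iff (by positivity) (by positivity)]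
    field_simp
  have e2 : (1 / L + (1 + ρ) / (ρ * μ)) ^ 2
      = ((1 + ρ) / (ρ * μ)) ^ 2 + (ρ * μ + 2 * (1 + ρ) * L) / (ρ * μ * L ^ 2) := by
    field_simp
    ring
  rw [e1, e2, add_lt_add_iff_left,
    div_lt_div_iff₀ (by positivity) (by positivity)]
  have hQ : 0 < ρ * (n:ℝ) * κ + (7 * ρ + 8) * κ + 4 * ρ := by
    have h1 : 0 < ρ * (n:ℝ) * κ := mul_pos (mul_pos hρ0 (by linarith)) hκpos
    have h2 : 0 < (7 * ρ + 8) * κ := mul_pos (by linarith) hκpos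
    linarith
  rw [hb0, lt_div_iff₀ hQ]
  have hq : (b:ℝ) * (ρ * (n:ℝ) * κ + (7 * ρ + 8) * κ + 4 * ρ) * μ
      = (b:ℝ) * (ρ * (n:ℝ) * L + (7 * ρ + 8) * L + 4 * ρ * μ) := by
    rw [← hκμ]; ring
  have hp : (8 * ρ * (n:ℝ) * κ + 8 * (n:ℝ) * κ + 4 * ρ * (n:ℝ)) * μ
      = 8 * ρ * (n:ℝ) * L + 8 * (n:ℝ) * L + 4 * ρ * (n:ℝ) * μ := by
    rw [← hκμ]; ring
  have step1 : (b:ℝ) * ((n:ℝ) - 1) * (ρ * μ * L ^ 2)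
        < (ρ * μ + 2 * (1 + ρ) * L) * (4 * μ * ((n:ℝ) - (b:ℝ)) * L)
      ↔ (b:ℝ) * (ρ * (n:ℝ) * L + (7 * ρ + 8) * L + 4 * ρ * μ)
        < 8 * ρ * (n:ℝ) * L + 8 * (n:ℝ) * L + 4 * ρ * (n:ℝ) * μ := by
    have hML : (0:ℝ) < μ * L := mul_pos hμ hL
    have key : (ρ * μ + 2 * (1 + ρ) * L) * (4 * μ * ((n:ℝ) - (b:ℝ)) * L)
          - (b:ℝ) * ((n:ℝ) - 1) * (ρ * μ * L ^ 2)
        = ((8 * ρ * (n:ℝ) * L + 8 * (n:ℝ) * L + 4 * ρ * (n:ℝ) * μ)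
          - (b:ℝ) * (ρ * (n:ℝ) * L + (7 * ρ + 8) * L + 4 * ρ * μ)) * (μ * L) := by
      ring
    constructor
    · intro h
      have hd : 0 < ((8 * ρ * (n:ℝ) * L + 8 * (n:ℝ) * L + 4 * ρ * (n:ℝ) * μ)
          - (b:ℝ) * (ρ * (n:ℝ) * L + (7 * ρ + 8) * L + 4 * ρ * μ)) * (μ * L) := by
        rw [← key]; linarith
      nlinarith [hd, hML]
    · intro h
      have hd : 0 < ((8 * ρ * (n:ℝ) * L + 8 * (n:ℝ) * L + 4 * ρ * (n:ℝ) * μ)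
          - (b:ℝ) * (ρ * (n:ℝ) * L + (7 * ρ + 8) * L + 4 * ρ * μ)) * (μ * L) :=
        mul_pos (by linarith) hML
      rw [← key] at hd
      linarith [hd]
  have step2 : (b:ℝ) * (ρ * (n:ℝ) * κ + (7 * ρ + 8) * κ + 4 * ρ)
        < 8 * ρ * (n:ℝ) * κ + 8 * (n:ℝ) * κ + 4 * ρ * (n:ℝ)
      ↔ (b:ℝ) * (ρ * (n:ℝ) * L + (7 * ρ + 8) * L + 4 * ρ * μ)
        < 8 * ρ * (n:ℝ) * L + 8 * (n:ℝ) * L + 4 * ρ * (n:ℝ) * μ := by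
    rw [← hq, ← hp, mul_lt_mul_iff_of_pos_right hμ]
  exact step1.trans step2.symm
end

section
/- Let e = exp(1). Set h = √( ((1+e)/μ)² + 1/(4μαL) ) − (1+e)/μ and m = ⌈ 8eακ·( e + 1 + √( 1/(4ακ) + (1+e)² ) ) ⌉, where α = (n−b)/(b(n−1)) and κ = L/μ. Then 4hLα < 1, m ≥ 1, and the resulting mS2GD rate ρ = 1/( m·h·μ·(1 − 4hLα) ) + 4hLα·(m+1) / ( m·(1 − 4hLα) ) satisfies ρ ≤ 1/e. -/
lemma rate_aux (t eR M β : ℝ) (ht : 0 < t) (he : 1 ≤ eR) (hM : 1 ≤ M)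
    (hMt : 2 * eR ≤ M * t) (hβ : β * (t + 2 * (1 + eR)) = 1) :
    1 / (M * t * (1 - β)) + β * (M + 1) / (M * (1 - β)) ≤ 1 / eR := by
  have ht2 : 0 < t + 2 * (1 + eR) := by linarith
  have ht2' : t + 2 * (1 + eR) ≠ 0 := ne_of_gt ht2
  have hβ' : β = 1 / (t + 2 * (1 + eR)) := by
    field_simp
    linarith [hβ]
  have hnum : 0 < t + 1 + 2 * eR := by linarith
  have h1β : 1 - β = (t + 1 + 2 * eR) / (t + 2 * (1 + eR)) := by
    rw [hβ']; field_simp; ring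
  have hMpos : 0 < M := by linarith
  have hepos : 0 < eR := by linarith
  have hne1 : eR ≠ 0 := ne_of_gt hepos
  have hne2 : M ≠ 0 := ne_of_gt hMpos
  have hne3 : t ≠ 0 := ne_of_gt ht
  have hne4 : t + 1 + 2 * eR ≠ 0 := ne_of_gt hnum
  have key3 : 1 / eR - (1 / (M * t * (1 - β)) + β * (M + 1) / (M * (1 - β)))
      = (M * t - 2 * eR) * (t + 1 + eR) / (eR * (M * t * (t + 1 + 2 * eR))) := by
    rw [h1β, hβ']
    field_simp
    ring
  have hfrac : 0 ≤ (M * t - 2 * eR) * (t + 1 + eR) / (eR * (M * t * (t + 1 + 2 * eR))) := by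
    apply div_nonneg
    · nlinarith
    · positivity
  linarith [key3, hfrac]


/-- Corollary 1 parameter choices: with `e = exp 1`,
`h = √(((1+e)/μ)² + 1/(4μαL)) − (1+e)/μ` and
`m = ⌈8eακ(e + 1 + √(1/(4ακ) + (1+e)²))⌉`, one has `4hLα < 1`, `m ≥ 1`, and the
resulting mS2GD rate satisfies `ρ ≤ 1/e`. -/
theorem corollary_rate_le_inv_e (L μ : ℝ) (hL : 0 < L) (hμ : 0 < μ)
    (n b : ℕ) (hn : 2 ≤ n) (hb1 : 1 ≤ b) (hbn : b < n)
    (α : ℝ) (hα : α = ((n : ℝ) - (b : ℝ)) / ((b : ℝ) * ((n : ℝ) - 1)))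
    (κ : ℝ) (hκ : κ = L / μ)
    (e : ℝ) (he : e = Real.exp 1)
    (h : ℝ)
    (hh : h = Real.sqrt (((1 + e) / μ) ^ 2 + 1 / (4 * μ * α * L)) - (1 + e) / μ)
    (m : ℕ)
    (hm : m = ⌈8 * e * α * κ * (e + 1 + Real.sqrt (1 / (4 * α * κ) + (1 + e) ^ 2))⌉₊) :
    4 * h * L * α < 1 ∧ 1 ≤ m ∧
      1 / ((m : ℝ) * h * μ * (1 - 4 * h * L * α))
        + 4 * h * L * α * ((m : ℝ) + 1) / ((m : ℝ) * (1 - 4 * h * L * α)) ≤ 1 / e := by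
  -- basic positivity
  have he2 : 2 ≤ e := by
    rw [he]; nlinarith [Real.add_one_le_exp 1]
  have hepos : (0:ℝ) < e := by linarith
  have hbpos : (0:ℝ) < (b:ℝ) := by exact_mod_cast Nat.lt_of_lt_of_le Nat.zero_lt_one hb1
  have hnb : (b:ℝ) < (n:ℝ) := by exact_mod_cast hbn
  have hn2 : (2:ℝ) ≤ (n:ℝ) := by exact_mod_cast hn
  have hαpos : 0 < α := by
    rw [hα]
    apply div_pos (by linarith) (mul_pos hbpos (by linarith))
  have hκpos : 0 < κ := by rw [hκ]; exact div_pos hL hμ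
  have hμ' : μ ≠ 0 := ne_of_gt hμ
  have hL' : L ≠ 0 := ne_of_gt hL
  have hα' : α ≠ 0 := ne_of_gt hαpos
  have hκ' : κ ≠ 0 := ne_of_gt hκpos
  -- abbreviations
  set A : ℝ := (1 + e) / μ with hA
  set B : ℝ := 1 / (4 * μ * α * L) with hB
  have hApos : 0 < A := div_pos (by linarith) hμ
  have hBpos : 0 < B := by rw [hB]; positivity
  have hS2 : (Real.sqrt (A ^ 2 + B)) ^ 2 = A ^ 2 + B :=
    Real.sq_sqrt (by positivity)
  -- h > 0
  have hhpos : 0 < h := by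
    rw [hh]
    have hs := Real.sqrt_nonneg (A ^ 2 + B)
    nlinarith [hS2, hApos, hBpos]
  -- quadratic identity for h
  have hq : h ^ 2 + 2 * A * h = B := by
    rw [hh]; linear_combination hS2
  have hq' : 4 * μ * α * L * h ^ 2 + 8 * α * L * (1 + e) * h = 1 := by
    have h2 : h ^ 2 + 2 * ((1 + e) / μ) * h = 1 / (4 * μ * α * L) := hq
    field_simp at h2
    have h3 : μ * (4 * μ * α * L * h ^ 2 + 8 * α * L * (1 + e) * h) = μ * 1 := by
      linear_combination μ * h2
    exact mul_left_cancel₀ hμ' h3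
  have key : 4 * h * L * α * (μ * h + 2 * (1 + e)) = 1 := by
    linear_combination hq'
  -- part 1 : 4 h L α < 1
  have hβpos : 0 < 4 * h * L * α := by positivity
  have part1 : 4 * h * L * α < 1 := by
    nlinarith [key, mul_pos hμ hhpos]
  -- relation between μ h and the sqrt in m
  set Q : ℝ := 1 / (4 * α * κ) + (1 + e) ^ 2 with hQdef
  have hQnn : 0 ≤ Q := by rw [hQdef]; positivity
  have hQ2 : (Real.sqrt Q) ^ 2 = Q := Real.sq_sqrt hQnn
  have hμS : μ * Real.sqrt (A ^ 2 + B) = Real.sqrt Q := by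
    have harg : Q = μ ^ 2 * (A ^ 2 + B) := by
      rw [hQdef, hA, hB, hκ]
      field_simp
      ring
    rw [harg, Real.sqrt_mul (by positivity) (A ^ 2 + B), Real.sqrt_sq hμ.le]
  have hμh : μ * h = Real.sqrt Q - (1 + e) := by
    rw [hh]
    have : μ * (Real.sqrt (A ^ 2 + B) - A) = μ * Real.sqrt (A ^ 2 + B) - μ * A := by ring
    rw [this, hμS, hA]
    field_simp
  have h4ακ : (1 / (4 * α * κ)) * (4 * α * κ) = 1 := by field_simp
  have key2 : (μ * h) * (Real.sqrt Q + (1 + e)) * (4 * α * κ) = 1 := by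
    rw [hμh]
    linear_combination (4 * α * κ) * hQ2 + h4ακ
  -- part 2 : m ≥ 1
  have hargpos : 0 < 8 * e * α * κ * (e + 1 + Real.sqrt Q) := by
    have := Real.sqrt_nonneg Q
    apply mul_pos (by positivity) (by linarith)
  have part2 : 1 ≤ m := by
    rw [hm]
    exact Nat.ceil_pos.mpr hargpos
  -- m * (μ h) ≥ 2 e
  have hMarg : 8 * e * α * κ * (e + 1 + Real.sqrt Q) ≤ (m:ℝ) := by
    rw [hm]; exact Nat.le_ceil _
  have hargmul : 8 * e * α * κ * (e + 1 + Real.sqrt Q) * (μ * h) = 2 * e := by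
    linear_combination 2 * e * key2
  have hμhpos : 0 < μ * h := mul_pos hμ hhpos
  have hMt : 2 * e ≤ (m:ℝ) * (μ * h) := by
    rw [← hargmul]
    exact mul_le_mul_of_nonneg_right hMarg hμhpos.le
  have hM1 : 1 ≤ (m:ℝ) := by exact_mod_cast part2
  -- conclude
  refine ⟨part1, part2, ?_⟩
  have := rate_aux (μ * h) e (m:ℝ) (4 * h * L * α) hμhpos (by linarith) hM1 hMt key
  have heq : (m:ℝ) * h * μ * (1 - 4 * h * L * α)
      = (m:ℝ) * (μ * h) * (1 - 4 * h * L * α) := by ring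
  rw [heq]
  exact this
end

section
/- (Proximal lazy updates with ℓ1-regularizer, case g ≥ λ.) Let λ > 0, h > 0, g ∈ ℝ with g ≥ λ, and y ∈ ℝ. Set M = (λ + g)h, m = −(λ − g)h (so M > m ≥ 0), and p = ⌊y/M⌋. Define y_0 = y and, for s ≥ 1, y_s = the unique minimizer over x ∈ ℝ of (1/2)( x − (y_{s−1} − h·g) )² + λh·|x|. Then for every integer τ ≥ 1: if p ≥ τ then y_τ = y − τ·M, and if p < τ then y_τ = min( y − [p]_+·M, m ) − (τ − [p]_+)·m, where [z]_+ = max(z, 0). -/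
/-- Soft-thresholding is the strict minimizer of the prox objective. -/
lemma prox_strict (z t c x : ℝ) (ht : 0 < t)
    (hc : (t ≤ z ∧ c = z - t) ∨ (z ≤ -t ∧ c = z + t) ∨ (|z| ≤ t ∧ c = 0))
    (hx : x ≠ c) :
    (1 / 2) * (c - z) ^ 2 + t * |c| < (1 / 2) * (x - z) ^ 2 + t * |x| := by
  have hxc : 0 < (x - c) ^ 2 := by
    have h0 : x - c ≠ 0 := sub_ne_zero.mpr hx
    positivity
  rcases hc with ⟨hz, rfl⟩ | ⟨hz, rfl⟩ | ⟨hz, rfl⟩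
  · have h1 : |z - t| = z - t := abs_of_nonneg (by linarith)
    have h2 : x ≤ |x| := le_abs_self x
    rw [h1]
    nlinarith [mul_nonneg ht.le (sub_nonneg.mpr h2), hxc]
  · have h1 : |z + t| = -(z + t) := abs_of_nonpos (by linarith)
    have h2 : -x ≤ |x| := neg_le_abs x
    rw [h1]
    nlinarith [mul_nonneg ht.le (by linarith : (0:ℝ) ≤ |x| + x), hxc]
  · have h2 : x * z ≤ |x| * t := by
      calc x * z ≤ |x * z| := le_abs_self _
        _ = |x| * |z| := abs_mul x z
        _ ≤ |x| * t := mul_le_mul_of_nonneg_left hz (abs_nonneg x)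
    have h3 : 0 ≤ t * |x| := mul_nonneg ht.le (abs_nonneg x)
    simp only [abs_zero]
    nlinarith [hxc]

/-- Lemma 2, case `g ≥ λ` (proximal lazy updates with ℓ1-regularizer).
With `M = (λ+g)h`, `m = −(λ−g)h`, `p = ⌊y₀/M⌋`, and `y (s+1)` the minimizer of
`x ↦ (1/2)(x − (y s − hg))² + λh|x|`: for `τ ≥ 1`, if `p ≥ τ` then
`y τ = y₀ − τM`, and if `p < τ` then
`y τ = min(y₀ − [p]₊·M, m) − (τ − [p]₊)·m`, where `[z]₊ = max z 0`. -/
theorem lazy_prox_l1_case_ge (lam h g : ℝ) (hlam : 0 < lam) (hh : 0 < h)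
    (hg : lam ≤ g) (y0 : ℝ)
    (M m : ℝ) (hM : M = (lam + g) * h) (hm : m = -(lam - g) * h)
    (p : ℤ) (hp : p = ⌊y0 / M⌋)
    (y : ℕ → ℝ) (hy0 : y 0 = y0)
    (hys : ∀ s, ∀ x : ℝ,
        (1 / 2) * (y (s + 1) - (y s - h * g)) ^ 2 + lam * h * |y (s + 1)|
          ≤ (1 / 2) * (x - (y s - h * g)) ^ 2 + lam * h * |x|) :
    ∀ τ : ℕ, 1 ≤ τ →
      ((τ : ℤ) ≤ p → y τ = y0 - (τ : ℝ) * M) ∧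
      (p < (τ : ℤ) →
        y τ = min (y0 - ((max p 0 : ℤ) : ℝ) * M) m
          - ((τ : ℝ) - ((max p 0 : ℤ) : ℝ)) * m) := by
  have hMpos : 0 < M := by rw [hM]; nlinarith
  have hm0 : 0 ≤ m := by rw [hm]; nlinarith
  have hmM : m < M := by rw [hm, hM]; nlinarith
  have htpos : 0 < lam * h := by positivity
  -- the one-step update rule
  have step : ∀ s : ℕ, ∀ c : ℝ,
      ((M ≤ y s ∧ c = y s - M) ∨ (y s ≤ m ∧ c = y s - m) ∨
        (m ≤ y s ∧ y s ≤ M ∧ c = 0)) → y (s + 1) = c := by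
    intro s c hc
    by_contra hne
    have hcases : (lam * h ≤ y s - h * g ∧ c = (y s - h * g) - lam * h) ∨
        (y s - h * g ≤ -(lam * h) ∧ c = (y s - h * g) + lam * h) ∨
        (|y s - h * g| ≤ lam * h ∧ c = 0) := by
      rcases hc with ⟨h1, h2⟩ | ⟨h1, h2⟩ | ⟨h1, h2, h3⟩
      · left
        rw [hM] at h1 h2
        exact ⟨by nlinarith, by linear_combination h2⟩
      · right; left
        rw [hm] at h1 h2
        exact ⟨by nlinarith, by linear_combination h2⟩
      · right; right
        rw [hm] at h1
        rw [hM] at h2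
        exact ⟨abs_le.mpr ⟨by nlinarith, by nlinarith⟩, h3⟩
    have hlt := prox_strict (y s - h * g) (lam * h) c (y (s + 1)) htpos hcases hne
    have hle := hys s c
    linarith
  -- floor bounds
  have hfl : (p : ℝ) * M ≤ y0 := by
    rw [hp]
    exact (le_div_iff₀ hMpos).mp (Int.floor_le _)
  have hfu : y0 < ((p : ℝ) + 1) * M := by
    rw [hp]
    exact (div_lt_iff₀ hMpos).mp (Int.lt_floor_add_one _)
  -- Phase 1: while s ≤ p, full-step decrease by M
  have A : ∀ s : ℕ, (s : ℤ) ≤ p → y s = y0 - (s : ℝ) * M := by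
    intro s
    induction s with
    | zero => intro _; simpa using hy0
    | succ n ih =>
      intro hn
      have hyn := ih (by omega)
      have hnp : (n : ℝ) + 1 ≤ (p : ℝ) := by exact_mod_cast (by omega : (n : ℤ) + 1 ≤ p)
      have hMle : M ≤ y n := by
        rw [hyn]
        nlinarith
      have hstep := step n (y n - M) (Or.inl ⟨hMle, rfl⟩)
      rw [hstep, hyn]
      push_cast
      ring
  set q : ℕ := p.toNat with hq
  set v : ℝ := y0 - (q : ℝ) * M with hv
  have hBq : y q = v := by
    rcases le_or_gt 0 p with hp0 | hp0
    · have hqp : (q : ℤ) = p := by omega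
      have := A q (le_of_eq hqp)
      simpa [hv] using this
    · have hq0 : q = 0 := by omega
      rw [hq0, hy0, hv, hq0]
      simp
  have hvM : v < M := by
    rcases le_or_gt 0 p with hp0 | hp0
    · have hqp : ((q : ℤ) : ℝ) = (p : ℝ) := by exact_mod_cast (by omega : (q : ℤ) = p)
      push_cast at hqp
      rw [hv, hqp]
      linarith
    · have hq0 : q = 0 := by omega
      have hp1 : (p : ℝ) + 1 ≤ 0 := by exact_mod_cast (by omega : (p : ℤ) + 1 ≤ 0)
      rw [hv, hq0]
      push_cast
      nlinarith
  -- Phase 2: after step q, lazy decrease by m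
  have C : ∀ k : ℕ, y (q + 1 + k) = min v m - ((k : ℝ) + 1) * m := by
    intro k
    induction k with
    | zero =>
      rcases le_or_gt v m with hvm | hvm
      · have hstep := step q (y q - m) (Or.inr (Or.inl ⟨by rw [hBq]; exact hvm, rfl⟩))
        have : y (q + 1 + 0) = y (q + 1) := by norm_num
        rw [this, hstep, hBq, min_eq_left hvm]
        norm_num
      · have hstep := step q 0 (Or.inr (Or.inr ⟨by rw [hBq]; linarith, by rw [hBq]; linarith, rfl⟩))
        have : y (q + 1 + 0) = y (q + 1) := by norm_num
        rw [this, hstep, min_eq_right hvm.le]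
        norm_num
    | succ k ih =>
      have hle : y (q + 1 + k) ≤ m := by
        rw [ih]
        have h1 : min v m ≤ m := min_le_right _ _
        nlinarith [Nat.cast_nonneg (α := ℝ) k]
      have hstep := step (q + 1 + k) (y (q + 1 + k) - m) (Or.inr (Or.inl ⟨hle, rfl⟩))
      have he : q + 1 + (k + 1) = (q + 1 + k) + 1 := by omega
      rw [he, hstep, ih]
      push_cast
      ring
  intro τ hτ
  constructor
  · intro hτp
    exact A τ hτp
  · intro hpτ
    have hqτ : q + 1 ≤ τ := by omega
    obtain ⟨k, hk⟩ : ∃ k, τ = q + 1 + k := ⟨τ - (q + 1), by omega⟩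
    have hmax : ((max p 0 : ℤ) : ℝ) = (q : ℝ) := by
      exact_mod_cast (by omega : max p 0 = (q : ℤ))
    rw [hk, C k, hmax, ← hv]
    push_cast
    ring_nf
end

section
/- (Proximal lazy updates with ℓ1-regularizer, case −λ < g < λ.) Let λ > 0, h > 0, g ∈ ℝ with −λ < g < λ, and y ∈ ℝ. Set M = (λ + g)h and m = −(λ − g)h (so m < 0 < M). Define y_0 = y and, for s ≥ 1, y_s = the unique minimizer over x ∈ ℝ of (1/2)( x − (y_{s−1} − h·g) )² + λh·|x|. Then for every integer τ ≥ 1: if y ≥ 0 then y_τ = max( y − τ·M, 0 ), and if y < 0 then y_τ = min( y − τ·m, 0 ). -/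
noncomputable def softthr (z c : ℝ) : ℝ :=
  if c < z then z - c else if z < -c then z + c else 0

lemma softthr_opt (z c x : ℝ) (hc : 0 ≤ c) :
    (1/2) * (softthr z c - z)^2 + c * |softthr z c|
      ≤ (1/2) * (x - z)^2 + c * |x| := by
  unfold softthr
  rcases abs_cases x with ⟨hx, hx'⟩ | ⟨hx, hx'⟩ <;>
    split_ifs with h1 h2 <;>
    simp only [hx] <;>
    [rw [abs_of_pos (by linarith)]; rw [abs_of_neg (by linarith)]; rw [abs_zero];
     rw [abs_of_pos (by linarith)]; rw [abs_of_neg (by linarith)]; rw [abs_zero]] <;>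
    nlinarith [sq_nonneg (x - z + c), sq_nonneg (x - z - c), sq_nonneg x]

lemma softthr_unique (z c w : ℝ) (hc : 0 < c)
    (hw : ∀ x : ℝ, (1/2) * (w - z)^2 + c * |w| ≤ (1/2) * (x - z)^2 + c * |x|) :
    w = softthr z c := by
  set t := softthr z c with ht
  have h1 := hw t
  have h2 := softthr_opt z c w hc.le
  have h3 := hw ((w + t) / 2)
  have habs : |(w + t) / 2| ≤ (|w| + |t|) / 2 := by
    rw [abs_div]
    simp only [abs_two]
    exact div_le_div_of_nonneg_right (abs_add_le w t) (by norm_num) |>.trans_eq rfl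
  have hsq : (w - t)^2 ≤ 0 := by nlinarith [h1, h2, h3, habs]
  have : w - t = 0 := by nlinarith [sq_nonneg (w - t)]
  linarith

lemma softthr_step_nonneg (lam h g a : ℝ) (hlam : 0 < lam) (hh : 0 < h)
    (hg2 : g < lam) (ha : 0 ≤ a) :
    softthr (a - h * g) (lam * h) = max (a - (lam + g) * h) 0 := by
  have hpos : 0 < (lam - g) * h := mul_pos (by linarith) hh
  unfold softthr
  split_ifs with h1 h2
  · rw [max_eq_left (by nlinarith)]; ring
  · exfalso; nlinarith
  · rw [max_eq_right (by nlinarith)]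

lemma softthr_step_nonpos (lam h g a : ℝ) (hlam : 0 < lam) (hh : 0 < h)
    (hg1 : -lam < g) (ha : a ≤ 0) :
    softthr (a - h * g) (lam * h) = min (a - (-(lam - g) * h)) 0 := by
  have hpos : 0 < (lam + g) * h := mul_pos (by linarith) hh
  unfold softthr
  split_ifs with h1 h2
  · exfalso; nlinarith
  · rw [min_eq_left (by nlinarith)]; ring
  · rw [min_eq_right (by nlinarith)]

/-- Lemma 2, case `−λ < g < λ` (proximal lazy updates with ℓ1-regularizer).
With `M = (λ+g)h`, `m = −(λ−g)h`, and `y (s+1)` the minimizer of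
`x ↦ (1/2)(x − (y s − hg))² + λh|x|`: for `τ ≥ 1`, if `y₀ ≥ 0` then
`y τ = max(y₀ − τM, 0)`, and if `y₀ < 0` then `y τ = min(y₀ − τm, 0)`. -/
theorem lazy_prox_l1_case_mid (lam h g : ℝ) (hlam : 0 < lam) (hh : 0 < h)
    (hg1 : -lam < g) (hg2 : g < lam) (y0 : ℝ)
    (M m : ℝ) (hM : M = (lam + g) * h) (hm : m = -(lam - g) * h)
    (y : ℕ → ℝ) (hy0 : y 0 = y0)
    (hys : ∀ s, ∀ x : ℝ,
        (1 / 2) * (y (s + 1) - (y s - h * g)) ^ 2 + lam * h * |y (s + 1)|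
          ≤ (1 / 2) * (x - (y s - h * g)) ^ 2 + lam * h * |x|) :
    ∀ τ : ℕ, 1 ≤ τ →
      (0 ≤ y0 → y τ = max (y0 - (τ : ℝ) * M) 0) ∧
      (y0 < 0 → y τ = min (y0 - (τ : ℝ) * m) 0) := by
  have hc : 0 < lam * h := mul_pos hlam hh
  have hMpos : 0 < M := by rw [hM]; exact mul_pos (by linarith) hh
  have hmneg : m < 0 := by
    rw [hm]
    have : 0 < (lam - g) * h := mul_pos (by linarith) hh
    linarith
  have key : ∀ s, y (s + 1) = softthr (y s - h * g) (lam * h) :=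
    fun s => softthr_unique _ _ _ hc (hys s)
  have pos_case : 0 ≤ y0 → ∀ τ : ℕ, 1 ≤ τ → y τ = max (y0 - (τ : ℝ) * M) 0 := by
    intro hy0pos τ hτ
    induction τ, hτ using Nat.le_induction with
    | base =>
      rw [key 0, hy0, softthr_step_nonneg lam h g y0 hlam hh hg2 hy0pos, hM]
      norm_num
    | succ n hn ih =>
      have hyn : 0 ≤ y n := by rw [ih]; exact le_max_right _ _
      rw [key n, softthr_step_nonneg lam h g (y n) hlam hh hg2 hyn, ih, ← hM]
      push_cast
      rcases le_or_gt (y0 - (n : ℝ) * M) 0 with hcase | hcase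
      · rw [max_eq_right hcase, max_eq_right (by linarith),
          max_eq_right (by nlinarith)]
      · rw [max_eq_left hcase.le]
        congr 1
        ring
  have neg_case : y0 < 0 → ∀ τ : ℕ, 1 ≤ τ → y τ = min (y0 - (τ : ℝ) * m) 0 := by
    intro hy0neg τ hτ
    induction τ, hτ using Nat.le_induction with
    | base =>
      rw [key 0, hy0, softthr_step_nonpos lam h g y0 hlam hh hg1 hy0neg.le, hm]
      norm_num
    | succ n hn ih =>
      have hyn : y n ≤ 0 := by rw [ih]; exact min_le_right _ _
      rw [key n, softthr_step_nonpos lam h g (y n) hlam hh hg1 hyn, ih, ← hm]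
      push_cast
      rcases le_or_gt 0 (y0 - (n : ℝ) * m) with hcase | hcase
      · rw [min_eq_right hcase, min_eq_right (by linarith),
          min_eq_right (by nlinarith)]
      · rw [min_eq_left hcase.le]
        congr 1
        ring
  intro τ hτ
  exact ⟨fun hp => pos_case hp τ hτ, fun hn => neg_case hn τ hτ⟩
end

section
/- (Proximal lazy updates with ℓ1-regularizer, case g ≤ −λ.) Let λ > 0, h > 0, g ∈ ℝ with g ≤ −λ, and y ∈ ℝ. Set M = (λ + g)h, m = −(λ − g)h (so m < M ≤ 0), and q = ⌊y/m⌋. Define y_0 = y and, for s ≥ 1, y_s = the unique minimizer over x ∈ ℝ of (1/2)( x − (y_{s−1} − h·g) )² + λh·|x|. Then for every integer τ ≥ 1: if q ≥ τ then y_τ = y − τ·m, and if q < τ then y_τ = max( y − [q]_+·m, M ) − (τ − [q]_+)·M, where [z]_+ = max(z, 0). -/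
/-- Strong-convexity optimality of the soft-thresholding point. -/
lemma soft_min (L z x : ℝ) (hL : 0 ≤ L) :
    (1 / 2) * ((max (z - L) 0 + min (z + L) 0) - z) ^ 2
        + L * |max (z - L) 0 + min (z + L) 0|
        + (1 / 2) * (x - (max (z - L) 0 + min (z + L) 0)) ^ 2
      ≤ (1 / 2) * (x - z) ^ 2 + L * |x| := by
  have hx1 : -|x| ≤ x := neg_abs_le x
  have hx2 : x ≤ |x| := le_abs_self x
  rcases le_or_gt z (-L) with h1 | h1
  · have hmax : max (z - L) 0 = 0 := max_eq_right (by linarith)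
    have hmin : min (z + L) 0 = z + L := min_eq_left (by linarith)
    rw [hmax, hmin, zero_add, abs_of_nonpos (by linarith)]
    nlinarith [abs_nonneg x]
  · rcases le_or_gt L z with h2 | h2
    · have hmax : max (z - L) 0 = z - L := max_eq_left (by linarith)
      have hmin : min (z + L) 0 = 0 := min_eq_right (by linarith)
      rw [hmax, hmin, add_zero, abs_of_nonneg (by linarith)]
      nlinarith [abs_nonneg x]
    · have hmax : max (z - L) 0 = 0 := max_eq_right (by linarith)
      have hmin : min (z + L) 0 = 0 := min_eq_right (by linarith)
      rw [hmax, hmin, add_zero, abs_of_nonpos le_rfl]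
      have hxz : x * z ≤ |x| * L := by
        calc x * z ≤ |x * z| := le_abs_self _
        _ = |x| * |z| := abs_mul x z
        _ ≤ |x| * L := by
            apply mul_le_mul_of_nonneg_left _ (abs_nonneg x)
            exact abs_le.2 ⟨le_of_lt h1, le_of_lt h2⟩
      nlinarith

/-- Lemma 2, case `g ≤ −λ` (proximal lazy updates with ℓ1-regularizer).
With `M = (λ+g)h`, `m = −(λ−g)h`, `q = ⌊y₀/m⌋`, and `y (s+1)` the minimizer of
`x ↦ (1/2)(x − (y s − hg))² + λh|x|`: for `τ ≥ 1`, if `q ≥ τ` then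
`y τ = y₀ − τm`, and if `q < τ` then
`y τ = max(y₀ − [q]₊·m, M) − (τ − [q]₊)·M`, where `[z]₊ = max z 0`. -/
theorem lazy_prox_l1_case_le (lam h g : ℝ) (hlam : 0 < lam) (hh : 0 < h)
    (hg : g ≤ -lam) (y0 : ℝ)
    (M m : ℝ) (hM : M = (lam + g) * h) (hm : m = -(lam - g) * h)
    (q : ℤ) (hq : q = ⌊y0 / m⌋)
    (y : ℕ → ℝ) (hy0 : y 0 = y0)
    (hys : ∀ s, ∀ x : ℝ,
        (1 / 2) * (y (s + 1) - (y s - h * g)) ^ 2 + lam * h * |y (s + 1)|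
          ≤ (1 / 2) * (x - (y s - h * g)) ^ 2 + lam * h * |x|) :
    ∀ τ : ℕ, 1 ≤ τ →
      ((τ : ℤ) ≤ q → y τ = y0 - (τ : ℝ) * m) ∧
      (q < (τ : ℤ) →
        y τ = max (y0 - ((max q 0 : ℤ) : ℝ) * m) M
          - ((τ : ℝ) - ((max q 0 : ℤ) : ℝ)) * M) := by
  have hL : 0 ≤ lam * h := by positivity
  have hmM : m < M := by rw [hM, hm]; nlinarith
  have hM0 : M ≤ 0 := by rw [hM]; nlinarith
  have hm0 : m < 0 := lt_of_lt_of_le hmM hM0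
  have hmne : m ≠ 0 := ne_of_lt hm0
  -- the explicit soft-thresholding update
  have hstep : ∀ s, y (s + 1) = max (y s - M) 0 + min (y s - m) 0 := by
    intro s
    set z := y s - h * g with hz
    have h1 := hys s (max (z - lam * h) 0 + min (z + lam * h) 0)
    have h2 := soft_min (lam * h) z (y (s + 1)) hL
    have h3 : (y (s + 1) - (max (z - lam * h) 0 + min (z + lam * h) 0)) ^ 2 ≤ 0 := by
      nlinarith
    have h4 : y (s + 1) = max (z - lam * h) 0 + min (z + lam * h) 0 := by
      nlinarith [sq_nonneg (y (s + 1) - (max (z - lam * h) 0 + min (z + lam * h) 0))]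
    rw [h4]
    have e1 : z - lam * h = y s - M := by rw [hz, hM]; ring
    have e2 : z + lam * h = y s - m := by rw [hz, hm]; ring
    rw [e1, e2]
  have lemA : ∀ s, y s ≤ m → y (s + 1) = y s - m := by
    intro s hs
    rw [hstep s, max_eq_right (by linarith), min_eq_left (by linarith), zero_add]
  have lemB : ∀ s, m ≤ y s → y (s + 1) = max (y s) M - M := by
    intro s hs
    rw [hstep s, min_eq_right (by linarith)]
    rcases le_total (y s) M with h' | h'
    · rw [max_eq_right (by linarith), max_eq_right h']; ring
    · rw [max_eq_left (by linarith), max_eq_left h']; ring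
  -- Part 1
  have part1 : ∀ τ : ℕ, (τ : ℤ) ≤ q → y τ = y0 - (τ : ℝ) * m := by
    intro τ
    induction τ with
    | zero => intro _; simp [hy0]
    | succ s ih =>
      intro hsq
      have hs : (s : ℤ) ≤ q := by push_cast at hsq; omega
      have hys' := ih hs
      have hfl : ((s : ℝ) + 1) ≤ y0 / m := by
        have := Int.le_floor.mp (hq ▸ hsq)
        push_cast at this
        linarith
      have hy0le : y0 ≤ ((s : ℝ) + 1) * m := by
        have := mul_le_mul_of_nonpos_right hfl (le_of_lt hm0)
        rw [div_mul_cancel₀ y0 hmne] at this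
        linarith
      have hym : y s ≤ m := by rw [hys']; linarith
      rw [lemA s hym, hys']; push_cast; ring
  -- Part 2 setup
  set P : ℕ := q.toNat with hP
  have hcast : ((max q 0 : ℤ) : ℝ) = (P : ℝ) := by
    rw [← Int.toNat_eq_max]; push_cast; rfl
  have hyP : y P = y0 - (P : ℝ) * m ∧ m ≤ y P := by
    rcases le_or_gt 0 q with hq0 | hq0
    · have hPq : (P : ℤ) = q := Int.toNat_of_nonneg hq0
      have h1 : y P = y0 - (P : ℝ) * m := part1 P (le_of_eq hPq)
      have hfl : y0 / m < (q : ℝ) + 1 := by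
        rw [hq]; exact Int.lt_floor_add_one _
      have h2 : ((q : ℝ) + 1) * m < y0 := by
        have := mul_lt_mul_of_neg_right hfl hm0
        rw [div_mul_cancel₀ y0 hmne] at this
        linarith
      have hPR : (P : ℝ) = (q : ℝ) := by exact_mod_cast hPq
      refine ⟨h1, ?_⟩
      rw [h1, hPR]; nlinarith
    · have hP0 : P = 0 := by omega
      have hfl : y0 / m < 0 := by
        have : (q : ℝ) + 1 ≤ 0 := by exact_mod_cast by omega
        have h2 : y0 / m < (q : ℝ) + 1 := by rw [hq]; exact Int.lt_floor_add_one _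
        linarith
      have hy0pos : 0 < y0 := by
        by_contra hc
        push_neg at hc
        have : 0 ≤ y0 / m := div_nonneg_of_nonpos hc (le_of_lt hm0)
        linarith
      rw [hP0]
      constructor
      · simp [hy0]
      · rw [hy0]; linarith
  -- Part 2 recursion
  have part2 : ∀ t : ℕ, y (P + 1 + t) = max (y P) M - ((t : ℝ) + 1) * M := by
    intro t
    induction t with
    | zero => simpa using lemB P hyP.2
    | succ t ih =>
      have hMle : M ≤ max (y P) M - ((t : ℝ) + 1) * M := by
        have := le_max_right (y P) M
        nlinarith
      have hge : m ≤ y (P + 1 + t) := by rw [ih]; linarith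
      have : y (P + 1 + (t + 1)) = max (y (P + 1 + t)) M - M := by
        have := lemB (P + 1 + t) hge
        rwa [show P + 1 + t + 1 = P + 1 + (t + 1) from rfl] at this
      rw [this, ih, max_eq_left hMle]
      push_cast; ring
  intro τ hτ
  refine ⟨part1 τ, ?_⟩
  intro hqτ
  have hPτ : P < τ := by omega
  obtain ⟨t, ht⟩ : ∃ t, τ = P + 1 + t := ⟨τ - P - 1, by omega⟩
  subst ht
  rw [part2 t, hyP.1, hcast]
  push_cast; ring
end
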